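/- arXiv:2412.12935 — 3 statements merged into one kernel-verified Lean document; each statement's English description precedes it below -/
import Mathlib

section
/- Let A be a commutative unital K-algebra, L a (K, A)-Lie-Rinehart algebra, and E an A-module. Suppose the exterior algebra ∧•_A E carries a Gerstenhaber algebra structure over A together with a Gerstenhaber algebra homomorphism ψ into the standard Gerstenhaber algebra (∧•_A L, ∧, [·,·]^L). Then E carries a (K, A)-Lie-Rinehart algebra structure with bracket [·,·]^E restricted to E and anchor ρ_L ∘ (ψ|_E), and ψ|_E : E → L is a morphism of Lie-Rinehart algebras. -/
universe u

/-- A `(K, A)`-Lie-Rinehart algebra structure on an `A`-module `L`. -/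
structure LieRinehart (K A L : Type u) [CommRing K] [CommRing A] [Algebra K A]
    [AddCommGroup L] [Module A L] where
  bracket : L → L → L
  anchor : L →ₗ[A] Derivation K A A
  bracket_add_left : ∀ x y z : L, bracket (x + y) z = bracket x z + bracket y z
  bracket_add_right : ∀ x y z : L, bracket x (y + z) = bracket x y + bracket x z
  bracket_skew : ∀ x y : L, bracket x y = - bracket y x
  bracket_jacobi : ∀ x y z : L,
    bracket x (bracket y z) = bracket (bracket x y) z + bracket y (bracket x z)
  bracket_leibniz : ∀ (x : L) (a : A) (y : L),
    bracket x (a • y) = a • bracket x y + anchor x a • y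
  anchor_bracket : ∀ (x y : L) (a : A),
    anchor (bracket x y) a = anchor x (anchor y a) - anchor y (anchor x a)

/-- A morphism of `(K, A)`-Lie-Rinehart algebras. -/
structure LieRinehartHom {K A L L' : Type u} [CommRing K] [CommRing A] [Algebra K A]
    [AddCommGroup L] [Module A L] [AddCommGroup L'] [Module A L']
    (𝓛 : LieRinehart K A L) (𝓛' : LieRinehart K A L') where
  toFun : L →ₗ[A] L'
  map_bracket : ∀ x y, toFun (𝓛.bracket x y) = 𝓛'.bracket (toFun x) (toFun y)
  map_anchor : ∀ x, 𝓛'.anchor (toFun x) = 𝓛.anchor x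

/-- The sign `(-1)^e` for `e : ℤ`. -/
def sgnz (e : ℤ) : ℤˣ := (-1 : ℤˣ) ^ e

/-- A Gerstenhaber algebra structure on the exterior algebra `∧•_A L` of a Lie-Rinehart
algebra `L`, whose bracket is the generalized Schouten–Nijenhuis bracket: it extends the Lie
bracket of `L` and the action `[D, f] = ρ(D)(f)` of the anchor, is of degree `-1` with respect
to the exterior grading, and satisfies the graded Leibniz rule with respect to the wedge
product, graded skew-symmetry and the graded Jacobi identity. -/
structure SchoutenBracket {K A L : Type u} [CommRing K] [CommRing A] [Algebra K A]
    [AddCommGroup L] [Module A L] (𝓛 : LieRinehart K A L) where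
  Br : ExteriorAlgebra A L → ExteriorAlgebra A L → ExteriorAlgebra A L
  add_left : ∀ x y z, Br (x + y) z = Br x z + Br y z
  add_right : ∀ x y z, Br x (y + z) = Br x y + Br x z
  degree : ∀ (i j : ℕ) (x y : ExteriorAlgebra A L),
    x ∈ ⋀[A]^i L → y ∈ ⋀[A]^j L → Br x y ∈ ⋀[A]^(i + j - 1) L
  on_gen : ∀ D D' : L,
    Br (ExteriorAlgebra.ι A D) (ExteriorAlgebra.ι A D') = ExteriorAlgebra.ι A (𝓛.bracket D D')
  on_scalar : ∀ (D : L) (f : A),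
    Br (ExteriorAlgebra.ι A D) (algebraMap A (ExteriorAlgebra A L) f) =
      algebraMap A (ExteriorAlgebra A L) (𝓛.anchor D f)
  leibniz : ∀ (i j : ℕ) (a b c : ExteriorAlgebra A L), a ∈ ⋀[A]^i L → b ∈ ⋀[A]^j L →
    Br a (b * c) = Br a b * c + sgnz (((i : ℤ) - 1) * j) • (b * Br a c)
  skew : ∀ (i j : ℕ) (a b : ExteriorAlgebra A L), a ∈ ⋀[A]^i L → b ∈ ⋀[A]^j L →
    Br a b = -(sgnz (((i : ℤ) - 1) * ((j : ℤ) - 1)) • Br b a)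
  jacobi : ∀ (i j : ℕ) (a b c : ExteriorAlgebra A L), a ∈ ⋀[A]^i L → b ∈ ⋀[A]^j L →
    Br a (Br b c) = Br (Br a b) c + sgnz (((i : ℤ) - 1) * ((j : ℤ) - 1)) • Br b (Br a c)

/-- A Gerstenhaber algebra structure on the exterior algebra `∧•_A E` of an `A`-module `E`
(with respect to the wedge product and the exterior grading, `∧^0 = A`). -/
structure ExtGerstenhaber (K A E : Type u) [CommRing K] [CommRing A] [Algebra K A]
    [AddCommGroup E] [Module A E] : Type u where
  Br : ExteriorAlgebra A E → ExteriorAlgebra A E → ExteriorAlgebra A E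
  add_left : ∀ x y z, Br (x + y) z = Br x z + Br y z
  add_right : ∀ x y z, Br x (y + z) = Br x y + Br x z
  degree : ∀ (i j : ℕ) (x y : ExteriorAlgebra A E),
    x ∈ ⋀[A]^i E → y ∈ ⋀[A]^j E → Br x y ∈ ⋀[A]^(i + j - 1) E
  leibniz : ∀ (i j : ℕ) (a b c : ExteriorAlgebra A E), a ∈ ⋀[A]^i E → b ∈ ⋀[A]^j E →
    Br a (b * c) = Br a b * c + sgnz (((i : ℤ) - 1) * j) • (b * Br a c)
  skew : ∀ (i j : ℕ) (a b : ExteriorAlgebra A E), a ∈ ⋀[A]^i E → b ∈ ⋀[A]^j E →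
    Br a b = -(sgnz (((i : ℤ) - 1) * ((j : ℤ) - 1)) • Br b a)
  jacobi : ∀ (i j : ℕ) (a b c : ExteriorAlgebra A E), a ∈ ⋀[A]^i E → b ∈ ⋀[A]^j E →
    Br a (Br b c) = Br (Br a b) c + sgnz (((i : ℤ) - 1) * ((j : ℤ) - 1)) • Br b (Br a c)


section Aux

variable {K A L E : Type u} [Field K] [CommRing A] [Algebra K A]
    [AddCommGroup L] [Module A L] [AddCommGroup E] [Module A E]

lemma exteriorPower_one_eq :
    (⋀[A]^1 E : Submodule A (ExteriorAlgebra A E)) =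
      LinearMap.range (ExteriorAlgebra.ι A : E →ₗ[A] ExteriorAlgebra A E) :=
  pow_one _

lemma exteriorPower_zero_eq :
    (⋀[A]^0 E : Submodule A (ExteriorAlgebra A E)) = 1 :=
  pow_zero _

lemma ι_mem_one (D : E) : ExteriorAlgebra.ι A D ∈ ⋀[A]^1 E := by
  rw [exteriorPower_one_eq]; exact ⟨D, rfl⟩

lemma algebraMap_mem_zero (a : A) :
    algebraMap A (ExteriorAlgebra A E) a ∈ ⋀[A]^0 E := by
  rw [exteriorPower_zero_eq]; exact Submodule.mem_one.mpr ⟨a, rfl⟩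

lemma sgnz_zero : sgnz 0 = 1 := by simp [sgnz]

end Aux

lemma ιE_injective (R M : Type u) [CommRing R] [AddCommGroup M] [Module R M] :
    Function.Injective (ExteriorAlgebra.ι R : M → ExteriorAlgebra R M) :=
  ExteriorAlgebra.ι_leftInverse.injective

/-- if the exterior algebra of an `A`-module `E` carries a Gerstenhaber algebra
structure together with a (grading- and bracket-preserving) Gerstenhaber homomorphism `ψ` to
the standard Gerstenhaber algebra of a Lie-Rinehart algebra `L`, then `E` carries a
Lie-Rinehart structure whose bracket is the restriction of the Gerstenhaber bracket and whose
anchor is `ρ_L ∘ ψ|_E`, and `ψ|_E : E → L` is a morphism of Lie-Rinehart algebras. -/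
theorem lieRinehart_of_extGerstenhaber_hom
    (K A L E : Type u) [Field K] [CommRing A] [Algebra K A]
    [AddCommGroup L] [Module A L] [AddCommGroup E] [Module A E]
    (𝓛 : LieRinehart K A L) (S : SchoutenBracket 𝓛) (SE : ExtGerstenhaber K A E)
    (ψ : ExteriorAlgebra A E →ₐ[A] ExteriorAlgebra A L)
    (hgr : ∀ (i : ℕ) (x : ExteriorAlgebra A E), x ∈ ⋀[A]^i E → ψ x ∈ ⋀[A]^i L)
    (hbr : ∀ x y : ExteriorAlgebra A E, ψ (SE.Br x y) = S.Br (ψ x) (ψ y)) :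
    ∃ (LRE : LieRinehart K A E) (φ : LieRinehartHom LRE 𝓛),
      (∀ D D' : E, ExteriorAlgebra.ι A (LRE.bracket D D') =
        SE.Br (ExteriorAlgebra.ι A D) (ExteriorAlgebra.ι A D')) ∧
      (∀ D : E, ψ (ExteriorAlgebra.ι A D) = ExteriorAlgebra.ι A (φ.toFun D)) ∧
      (∀ (D : E) (f : A), LRE.anchor D f = 𝓛.anchor (φ.toFun D) f) := by
  classical
  -- the restriction of ψ to degree 1, as a linear map E →ₗ[A] L
  set φ : E →ₗ[A] L :=
    ExteriorAlgebra.ιInv ∘ₗ ψ.toLinearMap ∘ₗ ExteriorAlgebra.ι A with hφdef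
  have hφ : ∀ D : E, ψ (ExteriorAlgebra.ι A D) = ExteriorAlgebra.ι A (φ D) := by
    intro D
    have h1 : ψ (ExteriorAlgebra.ι A D) ∈ ⋀[A]^1 L := hgr 1 _ (ι_mem_one D)
    rw [exteriorPower_one_eq] at h1
    obtain ⟨e, he⟩ := h1
    have : φ D = e := by
      simp only [hφdef, LinearMap.comp_apply, AlgHom.toLinearMap_apply, ← he,
        ExteriorAlgebra.ι_leftInverse e]
    rw [this, he]
  -- the bracket on E
  set bE : E → E → E := fun D D' =>
    ExteriorAlgebra.ιInv (SE.Br (ExteriorAlgebra.ι A D) (ExteriorAlgebra.ι A D')) with hbEdef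
  have hbE : ∀ D D' : E, ExteriorAlgebra.ι A (bE D D') =
      SE.Br (ExteriorAlgebra.ι A D) (ExteriorAlgebra.ι A D') := by
    intro D D'
    have h1 : SE.Br (ExteriorAlgebra.ι A D) (ExteriorAlgebra.ι A D') ∈ ⋀[A]^1 E := by
      have := SE.degree 1 1 _ _ (ι_mem_one D) (ι_mem_one D')
      simpa using this
    rw [exteriorPower_one_eq] at h1
    obtain ⟨e, he⟩ := h1
    simp only [hbEdef, ← he, ExteriorAlgebra.ι_leftInverse e]
  -- the anchor on E
  set aE : E →ₗ[A] Derivation K A A := 𝓛.anchor ∘ₗ φ with haEdef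
  -- the bracket of ι D with a scalar
  have hscal : ∀ (D : E) (a : A),
      SE.Br (ExteriorAlgebra.ι A D) (algebraMap A (ExteriorAlgebra A E) a) =
        algebraMap A (ExteriorAlgebra A E) (𝓛.anchor (φ D) a) := by
    intro D a
    have h0 : SE.Br (ExteriorAlgebra.ι A D) (algebraMap A (ExteriorAlgebra A E) a) ∈
        ⋀[A]^0 E := by
      have := SE.degree 1 0 _ _ (ι_mem_one D) (algebraMap_mem_zero a)
      simpa using this
    rw [exteriorPower_zero_eq] at h0
    obtain ⟨g, hg⟩ := Submodule.mem_one.mp h0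
    have hψ : ψ (SE.Br (ExteriorAlgebra.ι A D) (algebraMap A (ExteriorAlgebra A E) a)) =
        algebraMap A (ExteriorAlgebra A L) (𝓛.anchor (φ D) a) := by
      rw [hbr, hφ, ψ.commutes, S.on_scalar]
    rw [← hg] at hψ
    rw [ψ.commutes] at hψ
    rw [← hg, (ExteriorAlgebra.algebraMap_inj L g (𝓛.anchor (φ D) a)).mp hψ]
  have sgn1 : ∀ x : ExteriorAlgebra A E,
      sgnz (((1 : ℤ) - 1) * ((1 : ℤ) - 1)) • x = x := by
    intro x; norm_num [sgnz_zero]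
  have sgn1' : ∀ x : ExteriorAlgebra A E,
      sgnz (((1 : ℤ) - 1) * ((0 : ℕ) : ℤ)) • x = x := by
    intro x; norm_num [sgnz_zero]
  have sgn1'' : ∀ x : ExteriorAlgebra A E,
      sgnz (((1 : ℤ) - 1) * ((1 : ℕ) : ℤ)) • x = x := by
    intro x; norm_num [sgnz_zero]
  -- φ maps brackets to brackets
  have hφbr : ∀ x y : E, φ (bE x y) = 𝓛.bracket (φ x) (φ y) := by
    intro x y
    apply ιE_injective A L
    rw [← hφ, hbE, hbr, hφ, hφ, S.on_gen]
  -- the Lie-Rinehart structure on E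
  refine ⟨{
    bracket := bE
    anchor := aE
    bracket_add_left := ?_
    bracket_add_right := ?_
    bracket_skew := ?_
    bracket_jacobi := ?_
    bracket_leibniz := ?_
    anchor_bracket := ?_ }, ⟨φ, hφbr, fun x => rfl⟩, hbE, hφ, fun D f => rfl⟩
  · intro x y z
    apply ιE_injective A E
    rw [map_add, hbE, hbE, hbE, map_add, SE.add_left]
  · intro x y z
    apply ιE_injective A E
    rw [map_add, hbE, hbE, hbE, map_add, SE.add_right]
  · intro x y
    apply ιE_injective A E
    rw [map_neg, hbE, hbE, SE.skew 1 1 _ _ (ι_mem_one x) (ι_mem_one y)]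
    norm_num [sgnz]
  · intro x y z
    apply ιE_injective A E
    simp only [map_add, hbE]
    rw [SE.jacobi 1 1 _ _ _ (ι_mem_one x) (ι_mem_one y)]
    norm_num [sgnz]
  · intro x a y
    apply ιE_injective A E
    simp only [map_add, map_smul, hbE]
    rw [Algebra.smul_def a (ExteriorAlgebra.ι A y),
      SE.leibniz 1 0 _ _ _ (ι_mem_one x) (algebraMap_mem_zero a), hscal,
      ← Algebra.smul_def, ← Algebra.smul_def]
    simp only [haEdef, LinearMap.comp_apply]
    norm_num [sgnz]
    abel
  · intro x y a
    simp only [haEdef, LinearMap.comp_apply, hφbr, 𝓛.anchor_bracket]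
end

section
/- Let A be a commutative unital K-algebra and L a (K, A)-Lie-Rinehart algebra. The universal enveloping algebra U(A, L) satisfies the universal property: for any unital associative K-algebra B, any K-algebra morphism φ: A → B, and any K-Lie algebra morphism ψ: L → (B, [·,·]_c) satisfying φ(f)ψ(D) = ψ(fD) and [ψ(D), φ(f)]_c = φ(ρ(D)(f)) for all f ∈ A, D ∈ L, there exists a unique unital K-algebra morphism ψ̃: U(A, L) → B with ψ̃ ∘ ι_A = φ and ψ̃ ∘ ι_L = ψ. -/
universe u

/-- An enveloping algebra of a Lie-Rinehart algebra: an associative unital `K`-algebra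
generated by `A` and (the image of) `L`, subject to the Rinehart relations. -/
structure EnvAlg (K A L : Type u) [CommRing K] [CommRing A] [Algebra K A]
    [AddCommGroup L] [Module A L] (𝓛 : LieRinehart K A L) where
  U : Type u
  [ring : Ring U]
  [algebra : Algebra K U]
  ιA : A →ₐ[K] U
  ιL : L →+ U
  ιL_smul : ∀ (f : A) (D : L), ιL (f • D) = ιA f * ιL D
  comm_rel : ∀ D D', ιL D * ιL D' - ιL D' * ιL D = ιL (𝓛.bracket D D')
  anchor_rel : ∀ (D : L) (f : A), ιL D * ιA f - ιA f * ιL D = ιA (𝓛.anchor D f)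
  gen : ∀ S : Subalgebra K U, (∀ f, ιA f ∈ S) → (∀ D, ιL D ∈ S) → ∀ u, u ∈ S

attribute [instance] EnvAlg.ring EnvAlg.algebra

/-- The canonical filtration `U_{(m)}(A, L)`, spanned by `A` and products of at most `m`
elements of `ι_L(L)`. -/
noncomputable def EnvAlg.filt {K A L : Type u} [CommRing K] [CommRing A] [Algebra K A]
    [AddCommGroup L] [Module A L] {𝓛 : LieRinehart K A L} (𝓤 : EnvAlg K A L 𝓛) (m : ℕ) :
    Submodule K 𝓤.U :=
  Submodule.span K {u | ∃ k ≤ m, ∃ (f : A) (Ds : Fin k → L),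
    u = 𝓤.ιA f * (List.ofFn fun i => 𝓤.ιL (Ds i)).prod}

section Aux

variable {K A L : Type u} [CommRing K] [CommRing A] [Algebra K A]
  [AddCommGroup L] [Module A L] (𝓛 : LieRinehart K A L)

/-- relations defining the universal enveloping algebra -/
inductive LRRel : FreeAlgebra K (A ⊕ L) → FreeAlgebra K (A ⊕ L) → Prop
  | addA (f g : A) : LRRel (FreeAlgebra.ι K (Sum.inl (f + g)))
      (FreeAlgebra.ι K (Sum.inl f) + FreeAlgebra.ι K (Sum.inl g))
  | mulA (f g : A) : LRRel (FreeAlgebra.ι K (Sum.inl (f * g)))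
      (FreeAlgebra.ι K (Sum.inl f) * FreeAlgebra.ι K (Sum.inl g))
  | oneA : LRRel (FreeAlgebra.ι K (Sum.inl (1 : A))) 1
  | smulA (c : K) (f : A) : LRRel (FreeAlgebra.ι K (Sum.inl (c • f)))
      (c • FreeAlgebra.ι K (Sum.inl f))
  | addL (D D' : L) : LRRel (FreeAlgebra.ι K (Sum.inr (D + D')))
      (FreeAlgebra.ι K (Sum.inr D) + FreeAlgebra.ι K (Sum.inr D'))
  | smulL (f : A) (D : L) : LRRel (FreeAlgebra.ι K (Sum.inr (f • D)))
      (FreeAlgebra.ι K (Sum.inl f) * FreeAlgebra.ι K (Sum.inr D))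
  | comm (D D' : L) : LRRel (FreeAlgebra.ι K (Sum.inr D) * FreeAlgebra.ι K (Sum.inr D'))
      (FreeAlgebra.ι K (Sum.inr D') * FreeAlgebra.ι K (Sum.inr D)
        + FreeAlgebra.ι K (Sum.inr (𝓛.bracket D D')))
  | anch (D : L) (f : A) : LRRel (FreeAlgebra.ι K (Sum.inr D) * FreeAlgebra.ι K (Sum.inl f))
      (FreeAlgebra.ι K (Sum.inl f) * FreeAlgebra.ι K (Sum.inr D)
        + FreeAlgebra.ι K (Sum.inl (𝓛.anchor D f)))

noncomputable def LRmk : FreeAlgebra K (A ⊕ L) →ₐ[K] RingQuot (LRRel 𝓛) :=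
  RingQuot.mkAlgHom K (LRRel 𝓛)

theorem LRmk_rel {x y} (h : LRRel 𝓛 x y) : LRmk 𝓛 x = LRmk 𝓛 y :=
  RingQuot.mkAlgHom_rel K h

noncomputable def LREnv : EnvAlg K A L 𝓛 where
  U := RingQuot (LRRel 𝓛)
  ιA :=
    { toFun := fun f => LRmk 𝓛 (FreeAlgebra.ι K (Sum.inl f))
      map_one' := LRmk_rel 𝓛 (LRRel.oneA) |>.trans (map_one _)
      map_mul' := fun f g => (LRmk_rel 𝓛 (LRRel.mulA f g)).trans (map_mul _ _ _)
      map_zero' := by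
        have h := (LRmk_rel 𝓛 (LRRel.smulA (0 : K) (1 : A)))
        simpa using h
      map_add' := fun f g => (LRmk_rel 𝓛 (LRRel.addA f g)).trans (map_add _ _ _)
      commutes' := fun c => by
        show LRmk 𝓛 (FreeAlgebra.ι K (Sum.inl (algebraMap K A c))) = _
        rw [Algebra.algebraMap_eq_smul_one c, LRmk_rel 𝓛 (LRRel.smulA c (1 : A)), map_smul,
          LRmk_rel 𝓛 (LRRel.oneA (𝓛 := 𝓛)), map_one, Algebra.algebraMap_eq_smul_one] }
  ιL := AddMonoidHom.mk' (fun D => LRmk 𝓛 (FreeAlgebra.ι K (Sum.inr D)))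
      (fun D D' => (LRmk_rel 𝓛 (LRRel.addL D D')).trans (map_add _ _ _))
  ιL_smul := fun f D => (LRmk_rel 𝓛 (LRRel.smulL f D)).trans (map_mul _ _ _)
  comm_rel := fun D D' => by
    have h := LRmk_rel 𝓛 (LRRel.comm D D')
    simp only [map_mul, map_add] at h
    show LRmk 𝓛 (FreeAlgebra.ι K (Sum.inr D)) * LRmk 𝓛 (FreeAlgebra.ι K (Sum.inr D'))
        - LRmk 𝓛 (FreeAlgebra.ι K (Sum.inr D')) * LRmk 𝓛 (FreeAlgebra.ι K (Sum.inr D))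
        = LRmk 𝓛 (FreeAlgebra.ι K (Sum.inr (𝓛.bracket D D')))
    rw [h]; abel
  anchor_rel := fun D f => by
    have h := LRmk_rel 𝓛 (LRRel.anch D f)
    simp only [map_mul, map_add] at h
    show LRmk 𝓛 (FreeAlgebra.ι K (Sum.inr D)) * LRmk 𝓛 (FreeAlgebra.ι K (Sum.inl f))
        - LRmk 𝓛 (FreeAlgebra.ι K (Sum.inl f)) * LRmk 𝓛 (FreeAlgebra.ι K (Sum.inr D))
        = LRmk 𝓛 (FreeAlgebra.ι K (Sum.inl (𝓛.anchor D f)))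
    rw [h]; abel
  gen := fun S hA hL u => by
    obtain ⟨r, rfl⟩ := RingQuot.mkAlgHom_surjective K (LRRel 𝓛) u
    induction r using FreeAlgebra.induction with
    | grade0 c => simpa using S.algebraMap_mem c
    | grade1 x =>
      cases x with
      | inl f => exact hA f
      | inr D => exact hL D
    | mul x y hx hy => rw [map_mul]; exact S.mul_mem hx hy
    | add x y hx hy => rw [map_add]; exact S.add_mem hx hy

end Aux

/-- the universal enveloping algebra `U(A, L)` of a Lie-Rinehart algebra exists
(as an algebra generated by `A` and `L` subject to the Rinehart relations) and satisfies the
universal property. -/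
theorem universal_property_of_universal_enveloping_algebra
    (K A L : Type u) [Field K] [CommRing A] [Algebra K A]
    [AddCommGroup L] [Module A L] (𝓛 : LieRinehart K A L) :
    ∃ 𝓤 : EnvAlg K A L 𝓛,
      ∀ (B : Type u) [Ring B] [Algebra K B] (φ : A →ₐ[K] B) (ψ : L →+ B),
        (∀ (f : A) (D : L), ψ (f • D) = φ f * ψ D) →
        (∀ D D' : L, ψ (𝓛.bracket D D') = ψ D * ψ D' - ψ D' * ψ D) →
        (∀ (D : L) (f : A), ψ D * φ f - φ f * ψ D = φ (𝓛.anchor D f)) →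
        ∃! ψt : 𝓤.U →ₐ[K] B, (∀ f : A, ψt (𝓤.ιA f) = φ f) ∧ (∀ D : L, ψt (𝓤.ιL D) = ψ D) := by
  refine ⟨LREnv 𝓛, ?_⟩
  intro B _ _ φ ψ hsmul hcomm hanch
  set g : A ⊕ L → B := Sum.elim φ ψ with hg
  have hlift : ∀ x y, LRRel 𝓛 x y → FreeAlgebra.lift K g x = FreeAlgebra.lift K g y := by
    intro x y h
    induction h with
    | addA f f' => simp [g]
    | mulA f f' => simp [g]
    | oneA => simp [g]
    | smulA c f => simp [g]
    | addL D D' => simp [g]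
    | smulL f D => simp [g, hsmul]
    | comm D D' =>
      simp only [map_mul, map_add, FreeAlgebra.lift_ι_apply, hg, Sum.elim_inr, hcomm]
      abel
    | anch D f =>
      simp only [map_mul, map_add, FreeAlgebra.lift_ι_apply, hg, Sum.elim_inr, Sum.elim_inl,
        ← hanch]
      abel
  let ψt : (LREnv 𝓛).U →ₐ[K] B :=
    RingQuot.liftAlgHom K ⟨FreeAlgebra.lift K g, fun x y h => hlift x y h⟩
  have hmk : ∀ r : FreeAlgebra K (A ⊕ L), ψt (LRmk 𝓛 r) = FreeAlgebra.lift K g r := by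
    intro r
    exact RingQuot.liftAlgHom_mkAlgHom_apply _ _ _ r
  have hA : ∀ f : A, ψt ((LREnv 𝓛).ιA f) = φ f := by
    intro f
    show ψt (LRmk 𝓛 (FreeAlgebra.ι K (Sum.inl f))) = φ f
    rw [hmk]; simp [g]
  have hL : ∀ D : L, ψt ((LREnv 𝓛).ιL D) = ψ D := by
    intro D
    show ψt (LRmk 𝓛 (FreeAlgebra.ι K (Sum.inr D))) = ψ D
    rw [hmk]; simp [g]
  refine ⟨ψt, ⟨hA, hL⟩, ?_⟩
  intro ψt' ⟨hA', hL'⟩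
  ext u
  exact (LREnv 𝓛).gen (AlgHom.equalizer ψt' ψt)
      (fun f => show ψt' _ = ψt _ by rw [hA f, hA' f])
      (fun D => show ψt' _ = ψt _ by rw [hL D, hL' D]) u
end

section
/- Let φ: L' → L be a morphism of (K, A)-Lie-Rinehart algebras where both L' and L are free A-modules. Then the PBW isomorphisms ψ_{L'}: gr U(A, L') → Sym_A(L') and ψ_L: gr U(A, L) → Sym_A(L) are compatible with the induced maps: Sym(φ) ∘ ψ_{L'} = ψ_L ∘ gr(U(φ)), i.e. the square formed by gr(U(φ)), Sym(φ), ψ_{L'}, ψ_L commutes. -/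
universe u

/-- The symmetrized monomial `(1/k!) Σ_σ D̄_{σ(1)} ⋯ D̄_{σ(k)}` in an enveloping algebra. -/
noncomputable def symMon {K A L : Type u} [Field K] [CommRing A] [Algebra K A]
    [AddCommGroup L] [Module A L] {𝓛 : LieRinehart K A L} (𝓤 : EnvAlg K A L 𝓛)
    (k : ℕ) (D : Fin k → L) : 𝓤.U :=
  algebraMap K 𝓤.U ((k.factorial : K)⁻¹) *
    ∑ σ : Equiv.Perm (Fin k), (List.ofFn fun i => 𝓤.ιL (D (σ i))).prod

namespace EnvAlg

variable {K A L' L : Type u} [CommRing A] [AddCommGroup L'] [Module A L'] [AddCommGroup L]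
  [Module A L]

section CommRing

variable [CommRing K] [Algebra K A] {𝓛' : LieRinehart K A L'} {𝓛 : LieRinehart K A L}
  {𝓤' : EnvAlg K A L' 𝓛'} {𝓤 : EnvAlg K A L 𝓛} {Φ : 𝓤'.U →ₐ[K] 𝓤.U} {g : L' → L}

theorem map_prod_ofFn_ιL (hΦL : ∀ D, Φ (𝓤'.ιL D) = 𝓤.ιL (g D)) {k : ℕ} (D : Fin k → L') :
    Φ (List.ofFn fun i => 𝓤'.ιL (D i)).prod = (List.ofFn fun i => 𝓤.ιL (g (D i))).prod := by
  rw [map_list_prod, List.map_ofFn]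
  simp only [Function.comp_def, hΦL]

theorem map_filt_le (hΦA : ∀ f, Φ (𝓤'.ιA f) = 𝓤.ιA f)
    (hΦL : ∀ D, Φ (𝓤'.ιL D) = 𝓤.ιL (g D)) (m : ℕ) :
    (𝓤'.filt m).map Φ.toLinearMap ≤ 𝓤.filt m := by
  rw [filt, Submodule.map_span]
  refine Submodule.span_mono ?_
  rintro _ ⟨_, ⟨k, hk, f, Ds, rfl⟩, rfl⟩
  exact ⟨k, hk, f, g ∘ Ds, by simp only [AlgHom.toLinearMap_apply, map_mul, hΦA,
    map_prod_ofFn_ιL hΦL, Function.comp_apply]⟩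

end CommRing

theorem map_symMon [Field K] [Algebra K A] {𝓛' : LieRinehart K A L'} {𝓛 : LieRinehart K A L}
    {𝓤' : EnvAlg K A L' 𝓛'} {𝓤 : EnvAlg K A L 𝓛} {Φ : 𝓤'.U →ₐ[K] 𝓤.U} {g : L' → L}
    (hΦL : ∀ D, Φ (𝓤'.ιL D) = 𝓤.ιL (g D)) (k : ℕ) (D : Fin k → L') :
    Φ (symMon 𝓤' k D) = symMon 𝓤 k (g ∘ D) := by
  simp only [symMon, map_mul, AlgHom.commutes, map_sum, map_prod_ofFn_ιL hΦL,
    Function.comp_apply]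

end EnvAlg

/-- The square is encoded through its two ingredients: `Φ` being filtered is what induces
`gr(U(φ))`, and since the PBW maps send the class of `symMon 𝓤 k D` to the monomial
`D 0 ⋯ D (k-1)` of `Sym`, commutativity amounts to `Φ` preserving symmetrized monomials. -/
theorem pbw_natural_general
    (K A L' L : Type u) [Field K] [CommRing A] [Algebra K A]
    [AddCommGroup L'] [Module A L'] [AddCommGroup L] [Module A L]
    (𝓛' : LieRinehart K A L') (𝓛 : LieRinehart K A L) (φ : LieRinehartHom 𝓛' 𝓛)
    (𝓤' : EnvAlg K A L' 𝓛') (𝓤 : EnvAlg K A L 𝓛)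
    (Φ : 𝓤'.U →ₐ[K] 𝓤.U)
    (hΦA : ∀ f : A, Φ (𝓤'.ιA f) = 𝓤.ιA f)
    (hΦL : ∀ D : L', Φ (𝓤'.ιL D) = 𝓤.ιL (φ.toFun D)) :
    (∀ (m : ℕ) (u : 𝓤'.U), u ∈ 𝓤'.filt m → Φ u ∈ 𝓤.filt m) ∧
    (∀ (k : ℕ) (D : Fin k → L'),
      Φ (symMon 𝓤' k D) = symMon 𝓤 k (fun i => φ.toFun (D i))) :=
  ⟨fun m _ hu => EnvAlg.map_filt_le hΦA hΦL m (Submodule.mem_map_of_mem hu),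
    EnvAlg.map_symMon hΦL⟩

/-- the PBW isomorphisms are compatible with the maps induced by a morphism
`φ : L' → L` of (free) Lie-Rinehart algebras: the square formed by `gr(U(φ))`, `Sym(φ)` and the
two PBW maps commutes.  Concretely: the induced map `U(φ)` is filtered (so induces `gr(U(φ))`),
and it carries the symmetrization of a tuple in `L'` to the symmetrization of its image tuple,
which is precisely `Sym(φ) ∘ ψ_{L'} = ψ_L ∘ gr(U(φ))` on associated graded pieces. -/
theorem pbw_natural
    (K A L' L ι ι' : Type u) [Field K] [CharZero K] [CommRing A] [Algebra K A]
    [AddCommGroup L'] [Module A L'] [AddCommGroup L] [Module A L]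
    (𝓛' : LieRinehart K A L') (𝓛 : LieRinehart K A L) (φ : LieRinehartHom 𝓛' 𝓛)
    (b' : Module.Basis ι' A L') (b : Module.Basis ι A L)
    (𝓤' : EnvAlg K A L' 𝓛') (𝓤 : EnvAlg K A L 𝓛)
    (Φ : 𝓤'.U →ₐ[K] 𝓤.U)
    (hΦA : ∀ f : A, Φ (𝓤'.ιA f) = 𝓤.ιA f)
    (hΦL : ∀ D : L', Φ (𝓤'.ιL D) = 𝓤.ιL (φ.toFun D)) :
    (∀ (m : ℕ) (u : 𝓤'.U), u ∈ 𝓤'.filt m → Φ u ∈ 𝓤.filt m) ∧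
    (∀ (k : ℕ) (D : Fin k → L'),
      Φ (symMon 𝓤' k D) = symMon 𝓤 k (fun i => φ.toFun (D i))) :=
  pbw_natural_general K A L' L 𝓛' 𝓛 φ 𝓤' 𝓤 Φ hΦA hΦL
end
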